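/- Let n ≥ 1, N = 2^n, 0 ≤ ε ≤ 1, and let E be an N×N unitary matrix over ℂ with |Tr(E)| ≥ N(1 − ε²). Let C₀ = ∑_{P ∈ 𝒫_n} r_P·P be an N×N matrix whose Pauli coefficients r_P satisfy: the support {P : r_P ≠ 0} has exactly M elements and |r_P| = 1/sqrt(M) for every P in the support. Then for every P₁ ∈ 𝒫_n with r_{P₁} = 0: 0 ≤ |Tr(E·C₀·P₁)|/N ≤ sqrt(M)·sqrt(2ε² − ε⁴). -/

import Mathlib

open Matrix

/-- The four single-qubit Pauli matrices: I, X, Y, Z. -/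
noncomputable def pauliOne : Fin 4 → Matrix (Fin 2) (Fin 2) ℂ
  | 0 => 1
  | 1 => !![0, 1; 1, 0]
  | 2 => !![0, -Complex.I; Complex.I, 0]
  | 3 => !![1, 0; 0, -1]

/-- The `n`-qubit Pauli matrix indexed by `s : Fin n → Fin 4`: the `n`-fold
Kronecker (tensor) product of single-qubit Paulis, realized as a matrix on
the index type `Fin n → Fin 2` (of cardinality `2 ^ n`). -/
noncomputable def PauliTensor (n : ℕ) (s : Fin n → Fin 4) :
    Matrix (Fin n → Fin 2) (Fin n → Fin 2) ℂ :=
  Matrix.of fun x y => ∏ i, pauliOne (s i) (x i) (y i)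

/-! Write `N = 2 ^ n` and `D = E - (Tr E / N) • 1`. Orthogonality of the Pauli matrices under the
trace pairing gives `Tr (C₀ P₁) = N r_{P₁} = 0`, hence `Tr (E C₀ P₁) = Tr (D C₀ P₁)`, and the
Cauchy–Schwarz inequality bounds this by `‖D‖_F ‖C₀ P₁‖_F` in the Frobenius norm. For unitary `E`,
`‖D‖_F² = N - |Tr E|² / N ≤ N (2ε² - ε⁴)`; as `P₁` is unitary,
`‖C₀ P₁‖_F² = ‖C₀‖_F² = N ∑ |r_P|² ≤ N M`. -/

attribute [local instance] Matrix.frobeniusNormedAddCommGroup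

namespace Matrix

section PiKron

variable {R κ ι : Type*} [Fintype κ]

def piKron [CommMonoid R] (A : κ → Matrix ι ι R) : Matrix (κ → ι) (κ → ι) R :=
  of fun x y => ∏ k, A k (x k) (y k)

theorem piKron_one [CommSemiring R] [DecidableEq ι] :
    piKron (fun _ : κ => (1 : Matrix ι ι R)) = 1 := by
  ext x y
  simp only [piKron, of_apply, one_apply, Finset.prod_boole, funext_iff, Finset.mem_univ,
    true_implies]

theorem conjTranspose_piKron [CommSemiring R] [StarRing R] (A : κ → Matrix ι ι R) :
    (piKron A)ᴴ = piKron fun k => (A k)ᴴ := by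
  ext x y
  simp only [piKron, conjTranspose_apply, of_apply, star_prod]

variable [DecidableEq κ] [Fintype ι]

theorem piKron_mul [CommSemiring R] (A B : κ → Matrix ι ι R) :
    piKron A * piKron B = piKron fun k => A k * B k := by
  ext x y
  simp only [piKron, mul_apply, of_apply, Fintype.prod_sum, ← Finset.prod_mul_distrib]

theorem trace_piKron [CommSemiring R] (A : κ → Matrix ι ι R) :
    (piKron A).trace = ∏ k, (A k).trace := by
  simp only [piKron, trace, diag, of_apply, Fintype.prod_sum]

end PiKron

section Frobenius

variable {𝕜 m n : Type*} [RCLike 𝕜] [Fintype m] [Fintype n]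

theorem frobenius_norm_sq (A : Matrix m n 𝕜) : ‖A‖ ^ 2 = ∑ i, ∑ j, ‖A i j‖ ^ 2 := by
  change ‖WithLp.toLp 2 fun i => WithLp.toLp 2 fun j => A i j‖ ^ 2 = _
  simp only [PiLp.norm_sq_eq_of_L2]

theorem trace_mul_conjTranspose_self (A : Matrix m n 𝕜) :
    (A * Aᴴ).trace = ((‖A‖ ^ 2 : ℝ) : 𝕜) := by
  simp only [frobenius_norm_sq, trace, diag, mul_apply, conjTranspose_apply, RCLike.star_def,
    RCLike.mul_conj, RCLike.ofReal_sum, RCLike.ofReal_pow]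

theorem frobenius_norm_sq_eq_iff_trace {A : Matrix m n 𝕜} {x : ℝ} :
    ‖A‖ ^ 2 = x ↔ (A * Aᴴ).trace = (x : 𝕜) := by
  rw [trace_mul_conjTranspose_self, RCLike.ofReal_inj]

theorem norm_trace_mul_le (A : Matrix m n 𝕜) (B : Matrix n m 𝕜) :
    ‖(A * B).trace‖ ≤ ‖A‖ * ‖B‖ := by
  have hA : ‖A‖ = √(∑ p : m × n, ‖A p.1 p.2‖ ^ 2) := by
    simp only [Fintype.sum_prod_type, ← frobenius_norm_sq, Real.sqrt_sq (norm_nonneg A)]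
  have hB : ‖B‖ = √(∑ p : m × n, ‖B p.2 p.1‖ ^ 2) := by
    simp only [Fintype.sum_prod_type_right, ← frobenius_norm_sq, Real.sqrt_sq (norm_nonneg B)]
  calc ‖(A * B).trace‖ = ‖∑ p : m × n, A p.1 p.2 * B p.2 p.1‖ := by
        simp only [trace, diag, mul_apply, Fintype.sum_prod_type]
    _ ≤ ∑ p : m × n, ‖A p.1 p.2‖ * ‖B p.2 p.1‖ :=
        (norm_sum_le _ _).trans_eq (by simp only [norm_mul])
    _ ≤ ‖A‖ * ‖B‖ := hA ▸ hB ▸ Real.sum_mul_le_sqrt_mul_sqrt _ _ _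

variable [DecidableEq n]

theorem frobenius_norm_mul_unitary (A : Matrix m n 𝕜) {U : Matrix n n 𝕜}
    (hU : U ∈ unitaryGroup n 𝕜) : ‖A * U‖ = ‖A‖ := by
  have hUU : U * Uᴴ = 1 := mem_unitaryGroup_iff.mp hU
  refine (sq_eq_sq₀ (norm_nonneg _) (norm_nonneg _)).mp ?_
  rw [frobenius_norm_sq_eq_iff_trace, conjTranspose_mul, Matrix.mul_assoc, ← Matrix.mul_assoc U,
    hUU, Matrix.one_mul, trace_mul_conjTranspose_self]

theorem frobenius_norm_sq_of_mem_unitaryGroup {U : Matrix n n 𝕜} (hU : U ∈ unitaryGroup n 𝕜) :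
    ‖U‖ ^ 2 = Fintype.card n := by
  have hUU : U * Uᴴ = 1 := mem_unitaryGroup_iff.mp hU
  rw [frobenius_norm_sq_eq_iff_trace, hUU, trace_one, RCLike.ofReal_natCast]

theorem frobenius_norm_sq_sub_trace_div_card_smul_one (A : Matrix n n 𝕜) :
    ‖A - (A.trace / Fintype.card n) • 1‖ ^ 2 = ‖A‖ ^ 2 - ‖A.trace‖ ^ 2 / Fintype.card n := by
  rw [frobenius_norm_sq_eq_iff_trace]
  simp only [conjTranspose_sub, conjTranspose_smul, conjTranspose_one, Matrix.sub_mul,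
    Matrix.mul_sub, Matrix.smul_mul, Matrix.mul_smul, Matrix.one_mul, Matrix.mul_one, trace_sub,
    trace_smul, trace_one, trace_conjTranspose, trace_mul_conjTranspose_self, smul_eq_mul]
  rcases eq_or_ne (Fintype.card n) 0 with hN | hN
  · simp [hN]
  · have hN' : (Fintype.card n : 𝕜) ≠ 0 := Nat.cast_ne_zero.mpr hN
    rw [div_mul_cancel₀ _ hN', sub_self, mul_zero, sub_zero, div_mul_eq_mul_div, RCLike.star_def,
      RCLike.mul_conj]
    norm_cast

end Frobenius

end Matrix

section Pauli

theorem pauliOne_mul_self (a : Fin 4) : pauliOne a * pauliOne a = 1 := by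
  fin_cases a <;> ext x y <;> fin_cases x <;> fin_cases y <;>
    simp [pauliOne, mul_apply, Fin.sum_univ_two, one_apply]

theorem trace_pauliOne_mul (a b : Fin 4) :
    (pauliOne a * pauliOne b).trace = if a = b then 2 else 0 := by
  fin_cases a <;> fin_cases b <;>
    simp [pauliOne, trace, Fin.sum_univ_two, one_apply] <;> norm_num

theorem conjTranspose_pauliOne (a : Fin 4) : (pauliOne a)ᴴ = pauliOne a := by
  fin_cases a <;> ext x y <;> fin_cases x <;> fin_cases y <;> simp [pauliOne, one_apply]

variable {n : ℕ}

theorem pauliTensor_eq_piKron (s : Fin n → Fin 4) :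
    PauliTensor n s = piKron fun i => pauliOne (s i) := rfl

theorem pauliTensor_mul_self (s : Fin n → Fin 4) : PauliTensor n s * PauliTensor n s = 1 := by
  simp only [pauliTensor_eq_piKron, piKron_mul, pauliOne_mul_self, piKron_one]

theorem conjTranspose_pauliTensor (s : Fin n → Fin 4) : (PauliTensor n s)ᴴ = PauliTensor n s := by
  simp only [pauliTensor_eq_piKron, conjTranspose_piKron, conjTranspose_pauliOne]

theorem pauliTensor_mem_unitaryGroup (s : Fin n → Fin 4) :
    PauliTensor n s ∈ unitaryGroup (Fin n → Fin 2) ℂ :=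
  mem_unitaryGroup_iff.mpr <| by
    rw [star_eq_conjTranspose, conjTranspose_pauliTensor, pauliTensor_mul_self]

theorem trace_pauliTensor_mul (s t : Fin n → Fin 4) :
    (PauliTensor n s * PauliTensor n t).trace = if s = t then 2 ^ n else 0 := by
  simp only [pauliTensor_eq_piKron, piKron_mul, trace_piKron, trace_pauliOne_mul,
    Fintype.prod_ite_zero, funext_iff, Finset.prod_const, Finset.card_univ, Fintype.card_fin]

theorem trace_sum_smul_pauliTensor_mul (r : (Fin n → Fin 4) → ℂ) (t : Fin n → Fin 4) :
    ((∑ s, r s • PauliTensor n s) * PauliTensor n t).trace = 2 ^ n * r t := by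
  simp only [Matrix.sum_mul, trace_sum, Matrix.smul_mul, trace_smul, trace_pauliTensor_mul,
    smul_eq_mul, mul_ite, mul_zero, Finset.sum_ite_eq', Finset.mem_univ, if_true, mul_comm]

theorem frobenius_norm_sq_sum_smul_pauliTensor (r : (Fin n → Fin 4) → ℂ) :
    ‖∑ s, r s • PauliTensor n s‖ ^ 2 = 2 ^ n * ∑ s, ‖r s‖ ^ 2 := by
  rw [frobenius_norm_sq_eq_iff_trace]
  conv_lhs => rw [conjTranspose_sum]
  simp only [conjTranspose_smul, conjTranspose_pauliTensor, Matrix.mul_sum, Matrix.mul_smul,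
    trace_sum, trace_smul, trace_sum_smul_pauliTensor_mul, smul_eq_mul, Complex.star_def,
    mul_left_comm _ ((2 : ℂ) ^ n), ← Finset.mul_sum, Complex.conj_mul']
  norm_cast

end Pauli

theorem sum_norm_sq_le_of_norm_eq_inv_sqrt_card {α F : Type*} [Fintype α] [NormedAddCommGroup F]
    [DecidableEq F] {r : α → F} {M : ℕ} (hM : (Finset.univ.filter fun s => r s ≠ 0).card = M)
    (hr : ∀ s, r s ≠ 0 → ‖r s‖ = 1 / √M) : ∑ s, ‖r s‖ ^ 2 ≤ M := by
  have hsupp : ∑ s, ‖r s‖ ^ 2 = ∑ s ∈ Finset.univ.filter fun s => r s ≠ 0, ‖r s‖ ^ 2 :=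
    (Finset.sum_filter_of_ne fun s _ hs => by simpa using hs).symm
  rw [hsupp, Finset.sum_congr rfl fun s hs => by rw [hr s (Finset.mem_filter.mp hs).2],
    Finset.sum_const, hM, nsmul_eq_mul, div_pow, Real.sq_sqrt M.cast_nonneg, one_pow, mul_one_div]
  rcases M.eq_zero_or_pos with rfl | hpos
  · simp
  · exact (div_self_le_one _).trans (by exact_mod_cast hpos)

theorem trace_bound_offsupport_general (n : ℕ)
    (ε : ℝ) (hε0 : 0 ≤ ε) (hε1 : ε ≤ 1)
    (E : Matrix (Fin n → Fin 2) (Fin n → Fin 2) ℂ)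
    (hE : E ∈ Matrix.unitaryGroup (Fin n → Fin 2) ℂ)
    (hEtr : (2 : ℝ) ^ n * (1 - ε ^ 2) ≤ ‖E.trace‖)
    (r : (Fin n → Fin 4) → ℂ) (C₀ : Matrix (Fin n → Fin 2) (Fin n → Fin 2) ℂ)
    (hC₀ : C₀ = ∑ s : Fin n → Fin 4, r s • PauliTensor n s)
    (M : ℕ) (hM : (Finset.univ.filter (fun s => r s ≠ 0)).card = M)
    (hr : ∀ s : Fin n → Fin 4, r s ≠ 0 → ‖r s‖ = 1 / Real.sqrt M)
    (s₁ : Fin n → Fin 4) (hs₁ : r s₁ = 0) :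
    0 ≤ ‖(E * C₀ * PauliTensor n s₁).trace‖ / (2 : ℝ) ^ n ∧
      ‖(E * C₀ * PauliTensor n s₁).trace‖ / (2 : ℝ) ^ n
        ≤ Real.sqrt M * Real.sqrt (2 * ε ^ 2 - ε ^ 4) := by
  have hcard : (Fintype.card (Fin n → Fin 2) : ℝ) = 2 ^ n := by simp
  have hN : (0 : ℝ) < 2 ^ n := by positivity
  set D := E - (E.trace / Fintype.card (Fin n → Fin 2)) • 1
  have hT : (E * C₀ * PauliTensor n s₁).trace = (D * (C₀ * PauliTensor n s₁)).trace := by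
    rw [Matrix.sub_mul, trace_sub, Matrix.smul_mul, Matrix.one_mul, trace_smul, hC₀,
      trace_sum_smul_pauliTensor_mul, hs₁, mul_zero, smul_zero, sub_zero, Matrix.mul_assoc]
  have hD : ‖D‖ ^ 2 ≤ 2 ^ n * (2 * ε ^ 2 - ε ^ 4) := by
    rw [frobenius_norm_sq_sub_trace_div_card_smul_one, frobenius_norm_sq_of_mem_unitaryGroup hE,
      hcard, sub_le_iff_le_add, ← sub_le_iff_le_add', le_div_iff₀ hN]
    nlinarith [pow_le_pow_left₀ (mul_nonneg hN.le (by nlinarith)) hEtr 2]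
  have hC : ‖C₀ * PauliTensor n s₁‖ ^ 2 ≤ 2 ^ n * M := by
    rw [frobenius_norm_mul_unitary _ (pauliTensor_mem_unitaryGroup s₁), hC₀,
      frobenius_norm_sq_sum_smul_pauliTensor]
    exact mul_le_mul_of_nonneg_left (sum_norm_sq_le_of_norm_eq_inv_sqrt_card hM hr) hN.le
  refine ⟨by positivity, (div_le_iff₀ hN).mpr ?_⟩
  calc ‖(E * C₀ * PauliTensor n s₁).trace‖
      ≤ ‖D‖ * ‖C₀ * PauliTensor n s₁‖ := hT ▸ norm_trace_mul_le _ _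
    _ ≤ √(2 ^ n * (2 * ε ^ 2 - ε ^ 4)) * √(2 ^ n * M) := by
        gcongr <;> exact Real.le_sqrt_of_sq_le ‹_›
    _ = √M * √(2 * ε ^ 2 - ε ^ 4) * 2 ^ n := by
        rw [Real.sqrt_mul hN.le, Real.sqrt_mul hN.le, mul_mul_mul_comm, Real.mul_self_sqrt hN.le]
        ring

/-- Theorem: bounds on `|Tr (E * C₀ * P₁)| / N` for `P₁` outside the support of
the Pauli expansion of `C₀`, when `E` is a unitary with `|Tr E| ≥ N (1 - ε²)` and
all nonzero Pauli coefficients of `C₀` have modulus `1 / √M`, `M` being the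
size of the support. -/
theorem trace_bound_offsupport (n : ℕ) (hn : 1 ≤ n)
    (ε : ℝ) (hε0 : 0 ≤ ε) (hε1 : ε ≤ 1)
    (E : Matrix (Fin n → Fin 2) (Fin n → Fin 2) ℂ)
    (hE : E ∈ Matrix.unitaryGroup (Fin n → Fin 2) ℂ)
    (hEtr : (2 : ℝ) ^ n * (1 - ε ^ 2) ≤ ‖E.trace‖)
    (r : (Fin n → Fin 4) → ℂ) (C₀ : Matrix (Fin n → Fin 2) (Fin n → Fin 2) ℂ)
    (hC₀ : C₀ = ∑ s : Fin n → Fin 4, r s • PauliTensor n s)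
    (M : ℕ) (hM : (Finset.univ.filter (fun s => r s ≠ 0)).card = M)
    (hr : ∀ s : Fin n → Fin 4, r s ≠ 0 → ‖r s‖ = 1 / Real.sqrt M)
    (s₁ : Fin n → Fin 4) (hs₁ : r s₁ = 0) :
    0 ≤ ‖(E * C₀ * PauliTensor n s₁).trace‖ / (2 : ℝ) ^ n ∧
      ‖(E * C₀ * PauliTensor n s₁).trace‖ / (2 : ℝ) ^ n
        ≤ Real.sqrt M * Real.sqrt (2 * ε ^ 2 - ε ^ 4) :=
  trace_bound_offsupport_general n ε hε0 hε1 E hE hEtr r C₀ hC₀ M hM hr s₁ hs₁
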